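/- If X = S D Pᵀ is an SVD-like decomposition with S symplectic, P orthogonal and D of the stated block-diagonal form with positive diagonal entries σ_1,…,σ_p, then the rank of K = Xᵀ J_{2N} X equals 2p. -/

import Mathlib

open Matrix

/-!
A symplectic `S` preserves `J`, and an orthogonal `P` does not change ranks, so the rank of
`K = Xᵀ J X = P (Dᵀ J D) Pᵀ` is that of `Dᵀ J D`. The only nonzero entries of `Dᵀ J D` are
`±σ_i²` at the positions `(i, i+p+q)` and `(i+p+q, i)`, `i < p`; since no row has two nonzero
entries, `(Dᵀ J D)ᵀ (Dᵀ J D)` is diagonal and the rank is the number of nonzero columns, `2p`.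
-/

/-- The canonical Poisson matrix `J_{2N} = [[0, I_N], [-I_N, 0]]`. -/
def PoissonMatrix (N : ℕ) : Matrix (Fin N ⊕ Fin N) (Fin N ⊕ Fin N) ℝ :=
  Matrix.fromBlocks 0 1 (-1) 0

/-- The block matrix `D ∈ ℝ^{2N×n_s}` of the SVD-like decomposition, whose transpose has the
block form `Dᵀ = [[Σ,0,0,0,0],[0,I_q,0,0,0],[0,0,0,Σ,0],[0,0,0,0,0]]` with column partition
`(p, q, N−p−q, p, N−p)`, row partition `(p, q, p, n_s−2p−q)` and `Σ = diag(σ_0, …, σ_{p-1})`. -/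
def SVDlikeD (N ns p q : ℕ) (σ : ℕ → ℝ) : Matrix (Fin N ⊕ Fin N) (Fin ns) ℝ :=
  fun a i => match a with
  | Sum.inl a => if (a : ℕ) = (i : ℕ) ∧ (a : ℕ) < p then σ a
      else if (a : ℕ) = (i : ℕ) ∧ p ≤ (a : ℕ) ∧ (a : ℕ) < p + q then 1 else 0
  | Sum.inr a => if (a : ℕ) < p ∧ (i : ℕ) = (a : ℕ) + p + q then σ a else 0

theorem Matrix.rank_eq_card_nonzero_columns {m n R : Type*} [Fintype m] [Fintype n]
    [DecidableEq n] [Field R] [LinearOrder R] [IsStrictOrderedRing R] (A : Matrix m n R)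
    (hrow : ∀ i j j', A i j ≠ 0 → A i j' ≠ 0 → j = j') :
    A.rank = Fintype.card {j // ∃ i, A i j ≠ 0} := by
  have hdiag : Aᵀ * A = diagonal fun j => ∑ i, A i j * A i j := by
    ext j j'
    rw [mul_apply, diagonal_apply]
    split_ifs with h
    · subst h; rfl
    · refine Finset.sum_eq_zero fun i _ => ?_
      by_contra hne
      exact h (hrow i j j' (left_ne_zero_of_mul hne) (right_ne_zero_of_mul hne))
  rw [← rank_transpose_mul_self, hdiag, rank_diagonal]
  refine Fintype.card_congr (Equiv.subtypeEquivRight fun j => ?_)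
  simp [Finset.sum_eq_zero_iff_of_nonneg, mul_self_nonneg]

theorem transpose_mul_poissonMatrix_mul_apply {N : ℕ} {m n : Type*}
    (A : Matrix (Fin N ⊕ Fin N) m ℝ) (B : Matrix (Fin N ⊕ Fin N) n ℝ) (i : m) (j : n) :
    (Aᵀ * PoissonMatrix N * B) i j =
      ∑ a, (A (.inl a) i * B (.inr a) j - A (.inr a) i * B (.inl a) j) := by
  rw [Finset.sum_sub_distrib]
  simp [PoissonMatrix, mul_apply, Fintype.sum_sum_type, one_apply]
  ring

theorem Fin.sum_ite_val_eq_and {N : ℕ} {M : Type*} [AddCommMonoid M] (k : ℕ) (C : Prop)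
    [Decidable C] (hC : C → k < N) (v : M) :
    ∑ a : Fin N, (if (a : ℕ) = k ∧ C then v else 0) = if C then v else 0 := by
  by_cases h : C
  · simp [h, Fin.sum_univ_eq_sum_range (fun a => if a = k then v else 0), hC h]
  · simp [h]

theorem Fin.card_subtype_val_mem {n : ℕ} (s : Finset ℕ) (hs : ∀ k ∈ s, k < n) :
    Fintype.card {j : Fin n // (j : ℕ) ∈ s} = s.card := by
  rw [← Fintype.card_coe s]
  exact Fintype.card_congr
    { toFun := fun j => ⟨j.1, j.2⟩
      invFun := fun k => ⟨⟨k, hs k k.2⟩, k.2⟩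
      left_inv := fun _ => rfl
      right_inv := fun _ => rfl }

section
variable {N ns p q : ℕ} {σ : ℕ → ℝ}

theorem SVDlikeD_inl_mul_inr (a : Fin N) (i j : Fin ns) :
    SVDlikeD N ns p q σ (.inl a) i * SVDlikeD N ns p q σ (.inr a) j =
      if (a : ℕ) = i ∧ (i : ℕ) < p ∧ (j : ℕ) = i + p + q then σ i ^ 2 else 0 := by
  rcases eq_or_ne (a : ℕ) i with h | h
  · simp only [SVDlikeD, h, true_and]
    split_ifs <;> first | omega | ring1
  · simp only [SVDlikeD, h, false_and, if_false, zero_mul]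

theorem SVDlikeD_inr_mul_inl (a : Fin N) (i j : Fin ns) :
    SVDlikeD N ns p q σ (.inr a) i * SVDlikeD N ns p q σ (.inl a) j =
      if (a : ℕ) = j ∧ (j : ℕ) < p ∧ (i : ℕ) = j + p + q then σ j ^ 2 else 0 := by
  rw [mul_comm, SVDlikeD_inl_mul_inr]

theorem SVDlikeD_transpose_mul_poissonMatrix_mul_apply (hp : p ≤ N) (i j : Fin ns) :
    ((SVDlikeD N ns p q σ)ᵀ * PoissonMatrix N * SVDlikeD N ns p q σ) i j =
      (if (i : ℕ) < p ∧ (j : ℕ) = i + p + q then σ i ^ 2 else 0) -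
        (if (j : ℕ) < p ∧ (i : ℕ) = j + p + q then σ j ^ 2 else 0) := by
  simp only [transpose_mul_poissonMatrix_mul_apply, Finset.sum_sub_distrib,
    SVDlikeD_inl_mul_inr, SVDlikeD_inr_mul_inl]
  rw [Fin.sum_ite_val_eq_and _ _ fun h => by omega, Fin.sum_ite_val_eq_and _ _ fun h => by omega]

theorem SVDlikeD_transpose_mul_poissonMatrix_mul_apply_ne_zero_iff (hp : p ≤ N)
    (hσ : ∀ i < p, 0 < σ i) (i j : Fin ns) :
    ((SVDlikeD N ns p q σ)ᵀ * PoissonMatrix N * SVDlikeD N ns p q σ) i j ≠ 0 ↔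
      (i : ℕ) < p ∧ (j : ℕ) = i + p + q ∨ (j : ℕ) < p ∧ (i : ℕ) = j + p + q := by
  rw [SVDlikeD_transpose_mul_poissonMatrix_mul_apply hp]
  by_cases h₁ : (i : ℕ) < p ∧ (j : ℕ) = i + p + q
  · have := hσ i h₁.1
    rw [if_pos h₁, if_neg (by omega)]
    simp [h₁, this.ne']
  · by_cases h₂ : (j : ℕ) < p ∧ (i : ℕ) = j + p + q
    · have := hσ j h₂.1
      rw [if_neg h₁, if_pos h₂]
      simp [h₂, this.ne']
    · simp [h₁, h₂]

theorem rank_SVDlikeD_transpose_mul_poissonMatrix_mul (hp : p ≤ N) (hns : 2 * p + q ≤ ns)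
    (hσ : ∀ i < p, 0 < σ i) :
    ((SVDlikeD N ns p q σ)ᵀ * PoissonMatrix N * SVDlikeD N ns p q σ).rank = 2 * p := by
  have hrow : ∀ i j j' : Fin ns,
      ((SVDlikeD N ns p q σ)ᵀ * PoissonMatrix N * SVDlikeD N ns p q σ) i j ≠ 0 →
      ((SVDlikeD N ns p q σ)ᵀ * PoissonMatrix N * SVDlikeD N ns p q σ) i j' ≠ 0 → j = j' := by
    intro i j j' hj hj'
    rw [SVDlikeD_transpose_mul_poissonMatrix_mul_apply_ne_zero_iff hp hσ] at hj hj'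
    exact Fin.ext (by omega)
  simp only [rank_eq_card_nonzero_columns _ hrow,
    SVDlikeD_transpose_mul_poissonMatrix_mul_apply_ne_zero_iff hp hσ]
  have hcols : ∀ j : Fin ns, (∃ i : Fin ns,
      (i : ℕ) < p ∧ (j : ℕ) = i + p + q ∨ (j : ℕ) < p ∧ (i : ℕ) = j + p + q) ↔
      (j : ℕ) ∈ Finset.range p ∪ Finset.Ico (p + q) (2 * p + q) := by
    intro j
    simp only [Finset.mem_union, Finset.mem_range, Finset.mem_Ico]
    constructor
    · rintro ⟨i, hi⟩
      omega
    · rintro (hj | hj)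
      · exact ⟨⟨j + p + q, by omega⟩, Or.inr ⟨hj, rfl⟩⟩
      · exact ⟨⟨j - (p + q), by omega⟩, Or.inl ⟨by simp only; omega, by simp only; omega⟩⟩
  rw [Fintype.card_congr (Equiv.subtypeEquivRight hcols), Fin.card_subtype_val_mem _ (by
      simp only [Finset.mem_union, Finset.mem_range, Finset.mem_Ico]; omega),
    Finset.card_union_of_disjoint (by
      simp only [Finset.disjoint_left, Finset.mem_range, Finset.mem_Ico]; omega),
    Finset.card_range, Nat.card_Ico]
  omega

end

theorem stmt_10 {N ns p q : ℕ} (hpq : p + q ≤ N) (hns : 2 * p + q ≤ ns)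
    (σ : ℕ → ℝ) (hσ : ∀ i < p, 0 < σ i)
    (S : Matrix (Fin N ⊕ Fin N) (Fin N ⊕ Fin N) ℝ)
    (hS : Sᵀ * PoissonMatrix N * S = PoissonMatrix N)
    (P : Matrix (Fin ns) (Fin ns) ℝ) (hP : Pᵀ * P = 1)
    (X : Matrix (Fin N ⊕ Fin N) (Fin ns) ℝ)
    (hX : X = S * SVDlikeD N ns p q σ * Pᵀ) :
    (Xᵀ * PoissonMatrix N * X).rank = 2 * p := by
  set D := SVDlikeD N ns p q σ
  have hS' : ∀ M : Matrix (Fin N ⊕ Fin N) (Fin ns) ℝ,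
      Sᵀ * (PoissonMatrix N * (S * M)) = PoissonMatrix N * M := fun M => by
    rw [← Matrix.mul_assoc, ← Matrix.mul_assoc, hS]
  have hK : Xᵀ * PoissonMatrix N * X = P * (Dᵀ * PoissonMatrix N * D) * Pᵀ := by
    simp only [hX, transpose_mul, transpose_transpose, Matrix.mul_assoc, hS']
  rw [hK, rank_mul_eq_left_of_isUnit_det _ _ (isUnit_det_of_right_inverse hP),
    rank_mul_eq_right_of_isUnit_det _ _ (isUnit_det_of_left_inverse hP)]
  exact rank_SVDlikeD_transpose_mul_poissonMatrix_mul (by omega) hns hσ
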